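/- arXiv:1902.05909 — 3 statements merged into one kernel-verified Lean document; each statement's English description precedes it below -/
import Mathlib

section
/- The leximax extension of a linear order on candidates satisfies fixed-cardinality responsiveness: if X ⪰_lmax Y for k-element sets X, Y and Z is disjoint from X and Y, then X ∪ Z ⪰_lmax Y ∪ Z. -/
/-- The decreasing list of the elements of a finite set. -/
def descList {C : Type*} [LinearOrder C] (X : Finset C) : List C :=
  (X.sort (· ≤ ·)).reverse

/-- Leximax comparison of committees: either the decreasing lists agree, or at
the first index where they differ the element of `X` is preferred. -/
def leximax {C : Type*} [LinearOrder C] (X Y : Finset C) : Prop :=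
  descList X = descList Y ∨ List.Lex (· < ·) (descList Y) (descList X)

/-!
Adding the elements of `Z` one at a time, the decreasing list of `insert z X` is the decreasing
list of `X` with `z` inserted in its place. Inserting the same element into two lists preserves
their (strict) lexicographic order, so each step preserves leximax.
-/

lemma lex_orderedInsert {C : Type*} [LinearOrder C] (z : C) {l₁ l₂ : List C}
    (h : List.Lex (· < ·) l₂ l₁) :
    List.Lex (· < ·) (l₂.orderedInsert (· ≥ ·) z) (l₁.orderedInsert (· ≥ ·) z) := by
  induction h with
  | nil =>
    simp only [List.orderedInsert]
    split_ifs with hz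
    · exact List.Lex.cons List.Lex.nil
    · exact List.Lex.rel (lt_of_not_ge hz)
  | cons ht ih =>
    simp only [List.orderedInsert]
    split_ifs
    · exact List.Lex.cons (List.Lex.cons ht)
    · exact List.Lex.cons ih
  | rel hab =>
    simp only [List.orderedInsert]
    split_ifs with h₁ h₂ h₂
    · exact List.Lex.cons (List.Lex.rel hab)
    · exact List.Lex.rel (lt_of_not_ge h₂)
    · exact absurd (hab.trans_le h₂).le h₁
    · exact List.Lex.rel hab

section descList

open List

variable {C : Type*} [LinearOrder C]

lemma pairwise_descList (X : Finset C) : (descList X).Pairwise (· ≥ ·) :=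
  List.pairwise_reverse.2 (X.pairwise_sort (· ≤ ·))

lemma descList_perm_toList (X : Finset C) : descList X ~ X.toList :=
  (List.reverse_perm _).trans (Finset.sort_perm_toList _ _)

lemma descList_insert {X : Finset C} {z : C} (hz : z ∉ X) :
    descList (insert z X) = (descList X).orderedInsert (· ≥ ·) z := by
  refine List.Perm.eq_of_pairwise' (pairwise_descList _)
    ((pairwise_descList X).orderedInsert _ _) ?_
  calc descList (insert z X) ~ (insert z X).toList := descList_perm_toList _
    _ ~ z :: X.toList := Finset.toList_insert hz
    _ ~ z :: descList X := (descList_perm_toList X).symm.cons z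
    _ ~ (descList X).orderedInsert (· ≥ ·) z := (List.perm_orderedInsert _ _ _).symm

lemma leximax_insert {X Y : Finset C} {z : C} (hzX : z ∉ X) (hzY : z ∉ Y)
    (h : leximax X Y) : leximax (insert z X) (insert z Y) := by
  rw [leximax, descList_insert hzX, descList_insert hzY]
  rcases h with h | h
  · exact Or.inl (h ▸ rfl)
  · exact Or.inr (lex_orderedInsert z h)

end descList

theorem stmt_2_general {C : Type*} [LinearOrder C] (X Y Z : Finset C)
    (hZX : Disjoint Z X) (hZY : Disjoint Z Y)
    (h : leximax X Y) :
    leximax (X ∪ Z) (Y ∪ Z) := by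
  induction Z using Finset.induction_on with
  | empty => simpa using h
  | @insert z Z hzZ ih =>
    rw [Finset.disjoint_insert_left] at hZX hZY
    rw [Finset.union_insert, Finset.union_insert]
    exact leximax_insert (by simp [hZX.1, hzZ]) (by simp [hZY.1, hzZ]) (ih hZX.2 hZY.2)

/-- The leximax set extension satisfies fixed-cardinality responsiveness. -/
theorem stmt_2 {C : Type*} [LinearOrder C] (k : ℕ) (X Y Z : Finset C)
    (hX : X.card = k) (hY : Y.card = k)
    (hZX : Disjoint Z X) (hZY : Disjoint Z Y)
    (h : leximax X Y) :
    leximax (X ∪ Z) (Y ∪ Z) :=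
  stmt_2_general X Y Z hZX hZY h
end

section
/- Under deletion of non-top candidates justified by an upper bound: let λ ⊆ C, let q < |λ|, let T be the set of the q highest-scoring candidates of λ, and suppose X is a k-element subset with |X ∩ λ| ≤ q that maximizes total score among all such subsets. Then there exists a score-maximal such committee X' with X' ∩ λ ⊆ T; i.e. restricting attention to the top q candidates of λ does not decrease the optimal score. -/
/-- Deleting non-top candidates of a label with an upper bound is harmless:
if `X` is score-maximal among `k`-committees with at most `q` members of `lam`,
then there is an equally maximal such committee whose members of `lam` all lie
among the top `q` candidates `T` of `lam`. -/
theorem stmt_16 {C : Type*} [Fintype C] [DecidableEq C] (score : C → ℝ)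
    (lam T : Finset C) (q k : ℕ) (hq : q < lam.card)
    (hT : T ⊆ lam) (hTcard : T.card = q)
    (hTtop : ∀ t ∈ T, ∀ u ∈ lam \ T, score t ≥ score u)
    (X : Finset C) (hX : X.card = k) (hXq : (X ∩ lam).card ≤ q)
    (hmax : ∀ Y : Finset C, Y.card = k → (Y ∩ lam).card ≤ q →
      ∑ c ∈ X, score c ≥ ∑ c ∈ Y, score c) :
    ∃ X' : Finset C, X'.card = k ∧ (X' ∩ lam).card ≤ q ∧ X' ∩ lam ⊆ T ∧
      (∀ Y : Finset C, Y.card = k → (Y ∩ lam).card ≤ q →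
        ∑ c ∈ X', score c ≥ ∑ c ∈ Y, score c) := by
  classical
  have key : ∀ n (X : Finset C), ((X ∩ lam) \ T).card = n → X.card = k →
      (X ∩ lam).card ≤ q →
      (∀ Y : Finset C, Y.card = k → (Y ∩ lam).card ≤ q →
        ∑ c ∈ X, score c ≥ ∑ c ∈ Y, score c) →
      ∃ X' : Finset C, X'.card = k ∧ (X' ∩ lam).card ≤ q ∧ X' ∩ lam ⊆ T ∧
        (∀ Y : Finset C, Y.card = k → (Y ∩ lam).card ≤ q →
          ∑ c ∈ X', score c ≥ ∑ c ∈ Y, score c) := by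
    intro n
    induction n with
    | zero =>
      intro X h0 hk hqX hm
      refine ⟨X, hk, hqX, ?_, hm⟩
      rw [Finset.card_eq_zero, Finset.sdiff_eq_empty_iff_subset] at h0
      exact h0
    | succ n ih =>
      intro X h0 hk hqX hm
      obtain ⟨b, hb⟩ : ((X ∩ lam) \ T).Nonempty := by
        rw [← Finset.card_pos, h0]; omega
      rw [Finset.mem_sdiff, Finset.mem_inter] at hb
      obtain ⟨⟨hbX, hblam⟩, hbT⟩ := hb
      -- find t ∈ T \ X
      obtain ⟨t, htT, htX⟩ : ∃ t ∈ T, t ∉ X := by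
        by_contra h
        push_neg at h
        have hsub : T ⊆ X ∩ lam := fun x hx =>
          Finset.mem_inter.mpr ⟨h x hx, hT hx⟩
        have : (X ∩ lam).card = ((X ∩ lam) \ T).card + T.card :=
          (Finset.card_sdiff_add_card_eq_card hsub).symm
        omega
      have htlam : t ∈ lam := hT htT
      have htb : t ≠ b := fun h => hbT (h ▸ htT)
      set X' := insert t (X.erase b) with hX'def
      have htX' : t ∉ X.erase b := fun h => htX (Finset.mem_of_mem_erase h)
      have hkpos : 1 ≤ X.card := Finset.card_pos.mpr ⟨b, hbX⟩
      have hcard' : X'.card = k := by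
        rw [hX'def, Finset.card_insert_of_notMem htX', Finset.card_erase_of_mem hbX]
        omega
      have hinter : X' ∩ lam = insert t ((X ∩ lam).erase b) := by
        ext x
        simp only [hX'def, Finset.mem_inter, Finset.mem_insert, Finset.mem_erase]
        constructor
        · rintro ⟨h1 | ⟨h1, h2⟩, h3⟩
          · exact Or.inl h1
          · exact Or.inr ⟨h1, h2, h3⟩
        · rintro (rfl | ⟨h1, h2, h3⟩)
          · exact ⟨Or.inl rfl, htlam⟩
          · exact ⟨Or.inr ⟨h1, h2⟩, h3⟩
      have hbinter : b ∈ X ∩ lam := Finset.mem_inter.mpr ⟨hbX, hblam⟩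
      have htnotin : t ∉ (X ∩ lam).erase b := fun h =>
        htX (Finset.mem_inter.mp (Finset.mem_of_mem_erase h)).1
      have hcardinter : (X' ∩ lam).card ≤ q := by
        rw [hinter, Finset.card_insert_of_notMem htnotin,
          Finset.card_erase_of_mem hbinter]
        have : 1 ≤ (X ∩ lam).card := Finset.card_pos.mpr ⟨b, hbinter⟩
        omega
      have hbad : ((X' ∩ lam) \ T).card = n := by
        have : (X' ∩ lam) \ T = ((X ∩ lam) \ T).erase b := by
          rw [hinter]
          ext x
          simp only [Finset.mem_sdiff, Finset.mem_insert, Finset.mem_erase]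
          constructor
          · rintro ⟨rfl | ⟨h1, h2⟩, h3⟩
            · exact absurd htT h3
            · exact ⟨h1, h2, h3⟩
          · rintro ⟨h1, h2, h3⟩
            exact ⟨Or.inr ⟨h1, h2⟩, h3⟩
        rw [this, Finset.card_erase_of_mem (by
          rw [Finset.mem_sdiff]; exact ⟨hbinter, hbT⟩), h0]
        omega
      have hscore : ∑ c ∈ X', score c ≥ ∑ c ∈ X, score c := by
        rw [hX'def, Finset.sum_insert htX']
        have hsum : ∑ c ∈ X.erase b, score c = ∑ c ∈ X, score c - score b := by
          rw [← Finset.add_sum_erase X score hbX]; ring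
        rw [hsum]
        have := hTtop t htT b (Finset.mem_sdiff.mpr ⟨hblam, hbT⟩)
        linarith
      exact ih X' hbad hcard' hcardinter (fun Y hY1 hY2 => le_trans (hm Y hY1 hY2) hscore)
  exact key _ X rfl hX hXq hmax
end

section
/- Exchange lemma for optimal sub-committees under fixed-cardinality responsiveness: let ⪰ be a total preorder on equal-size subsets of C satisfying fixed-cardinality responsiveness, let A, B ⊆ C be disjoint, and let X = X₁ ∪ X₂ with X₁ ⊆ A, X₂ ⊆ B, |X₂| = s. If Z ⊆ B with |Z| = s is ⪰-maximal among s-subsets of B and Y ⊆ A with |Y| = |X₁| is ⪰-maximal among |X₁|-subsets of A, then Y ∪ Z ⪰ X. -/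
/-- Exchange lemma: under fixed-cardinality responsiveness, replacing the two
parts of a committee `X = X₁ ∪ X₂` (with `X₁ ⊆ A`, `X₂ ⊆ B`, `A` and `B`
disjoint) by optimal sub-committees `Y ⊆ A` and `Z ⊆ B` of the same sizes
yields a committee at least as good as `X`. -/
theorem stmt_18 {C : Type*} [Fintype C] [DecidableEq C]
    (R : Finset C → Finset C → Prop)
    (hrefl : ∀ X, R X X)
    (htrans : ∀ X Y Z, R X Y → R Y Z → R X Z)
    (htotal : ∀ X Y : Finset C, X.card = Y.card → R X Y ∨ R Y X)
    (hfcr : ∀ X Y Z : Finset C, X.card = Y.card → R X Y →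
      Disjoint Z X → Disjoint Z Y → R (X ∪ Z) (Y ∪ Z))
    (A B : Finset C) (hAB : Disjoint A B)
    (X₁ X₂ : Finset C) (hX₁ : X₁ ⊆ A) (hX₂ : X₂ ⊆ B) (s : ℕ) (hX₂s : X₂.card = s)
    (Z : Finset C) (hZ : Z ⊆ B) (hZs : Z.card = s)
    (hZmax : ∀ W ⊆ B, W.card = s → R Z W)
    (Y : Finset C) (hY : Y ⊆ A) (hYcard : Y.card = X₁.card)
    (hYmax : ∀ W ⊆ A, W.card = X₁.card → R Y W) :
    R (Y ∪ Z) (X₁ ∪ X₂) := by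
  have hZX₁ : Disjoint X₁ Z := hAB.mono hX₁ hZ
  have hX₁X₂ : Disjoint X₁ X₂ := hAB.mono hX₁ hX₂
  have hZY : Disjoint Z Y := (hAB.mono hY hZ).symm
  have h1 : R (Z ∪ X₁) (X₂ ∪ X₁) :=
    hfcr Z X₂ X₁ (hZs.trans hX₂s.symm) (hZmax X₂ hX₂ hX₂s) hZX₁ hX₁X₂
  have h2 : R (Y ∪ Z) (X₁ ∪ Z) :=
    hfcr Y X₁ Z hYcard (hYmax X₁ hX₁ rfl) hZY hZX₁.symm
  have h1' : R (X₁ ∪ Z) (X₁ ∪ X₂) := by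
    rwa [Finset.union_comm Z X₁, Finset.union_comm X₂ X₁] at h1
  exact htrans _ _ _ h2 h1'
end
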